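/- arXiv:2312.01116 — 2 statements merged into one kernel-verified Lean document; each statement's English description precedes it below -/
import Mathlib

section
/- Let k ≥ 2 be an integer, let ψ be a bounded complexity measure, and let A be a nontrivial closed class of decision tables from M_k^∞. Then the function H^∞_{ψ,A} is everywhere defined if and only if the function L_{ψ,A} is everywhere defined. -/
open Classical

noncomputable section

/-- A decision table with many-valued decisions over `E_k = {0,…,k-1}`.
Columns are labeled with attributes `f_i` identified with their indices `i : ℕ`;
a row is a function `ℕ → ℕ` supported on the attribute set, with values `< k`;
each row is labeled with a nonempty finite set of decisions. -/
structure Table (k : ℕ) where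
  attrs : Finset ℕ
  rows : Finset (ℕ → ℕ)
  dec : (ℕ → ℕ) → Finset ℕ
  rows_mem : ∀ r ∈ rows, (∀ i ∈ attrs, r i < k) ∧ (∀ i ∉ attrs, r i = 0)
  dec_nonempty : ∀ r ∈ rows, (dec r).Nonempty

namespace Table

variable {k : ℕ}

/-- a row satisfies a word (a list of (attribute, value) pairs) -/
def rowSat (r : ℕ → ℕ) (α : List (ℕ × ℕ)) : Prop := ∀ q ∈ α, r q.1 = q.2

/-- the word belongs to `Ω_k(T)` -/
def wordOk (T : Table k) (α : List (ℕ × ℕ)) : Prop := ∀ q ∈ α, q.1 ∈ T.attrs ∧ q.2 < k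

/-- the subtable `Tα` -/
def applyWord (T : Table k) (α : List (ℕ × ℕ)) : Table k where
  attrs := T.attrs
  rows := T.rows.filter (fun r => rowSat r α)
  dec := T.dec
  rows_mem := fun r hr => T.rows_mem r (Finset.mem_filter.mp hr).1
  dec_nonempty := fun r hr => T.dec_nonempty r (Finset.mem_filter.mp hr).1

/-- `T ∈ M_k^{∞c}` : the table has a common decision -/
def hasCommon (T : Table k) : Prop := ∃ d : ℕ, ∀ r ∈ T.rows, d ∈ T.dec r

/-- `N(T)` : number of rows -/
def NT (T : Table k) : ℕ := T.rows.card

/-- `W(T)` : number of columns (`0` for the empty table `Λ`) -/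
def WT (T : Table k) : ℕ := if T.rows = ∅ then 0 else T.attrs.card

/-- the closure `[T]` of `T` under removal of columns and changing of decisions:
`Q = J(ν, I(D,T))` for some `D ⊆ At(T)` and some `ν` (the decision labeling of `Q`
on its rows is arbitrary, i.e. is the arbitrary `ν` with nonempty finite values). -/
def closureT (T : Table k) : Set (Table k) :=
  {Q | ∃ D : Finset ℕ, D ⊆ T.attrs ∧ Q.attrs = T.attrs \ D ∧
      Q.rows = T.rows.image (fun r i => if i ∈ T.attrs \ D then r i else 0)}

end Table

/-- a closed class: `[A] = A` -/
def IsClosedClass {k : ℕ} (A : Set (Table k)) : Prop := ∀ T ∈ A, Table.closureT T ⊆ A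

/-- a nontrivial class: contains nonempty tables -/
def NontrivialClass {k : ℕ} (A : Set (Table k)) : Prop := ∃ T ∈ A, T.rows.Nonempty

/-- the part of a `k`-decision tree below one edge leaving the root -/
inductive DTree (k : ℕ) : Type
  | leaf (d : ℕ) : DTree k
  | node (a : ℕ) (n : ℕ) (lab : Fin (n + 1) → ℕ) (ch : Fin (n + 1) → DTree k) : DTree k

namespace DTree

variable {k : ℕ}

/-- the set of pairs (π(τ), terminal decision) over complete paths τ -/
def paths : DTree k → Set (List (ℕ × ℕ) × ℕ)
  | leaf d => {([], d)}
  | node a _ lab ch =>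
      ⋃ i, (fun p : List (ℕ × ℕ) × ℕ => ((a, lab i) :: p.1, p.2)) '' paths (ch i)

/-- edge labels belong to `E_k` -/
def wf : DTree k → Prop
  | leaf _ => True
  | node _ _ lab ch => (∀ i, lab i < k) ∧ ∀ i, wf (ch i)

/-- edges leaving any node are labeled with pairwise different numbers -/
def det : DTree k → Prop
  | leaf _ => True
  | node _ _ lab ch => Function.Injective lab ∧ ∀ i, det (ch i)

/-- the set of attributes attached to nodes -/
def attrs : DTree k → Finset ℕ
  | leaf _ => ∅
  | node a _ _ ch => insert a (Finset.univ.biUnion fun i => attrs (ch i))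

end DTree

/-- a `k`-decision tree: an unlabeled root with `n+1` unlabeled edges leaving it -/
structure KTree (k : ℕ) where
  n : ℕ
  sub : Fin (n + 1) → DTree k

namespace KTree

variable {k : ℕ}

def paths (Γ : KTree k) : Set (List (ℕ × ℕ) × ℕ) := ⋃ i, (Γ.sub i).paths

def wf (Γ : KTree k) : Prop := ∀ i, (Γ.sub i).wf

def attrs (Γ : KTree k) : Finset ℕ := Finset.univ.biUnion fun i => (Γ.sub i).attrs

end KTree

/-- partially bounded complexity measure on words over `P` -/
structure PBCM where
  toFun : List ℕ → ℕ
  pos : ∀ α, toFun α = 0 ↔ α = []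
  perm : ∀ α β, List.Perm α β → toFun α = toFun β
  mono : ∀ α β, toFun α ≤ toFun (α ++ β)
  subadd : ∀ α β, toFun (α ++ β) ≤ toFun α + toFun β

/-- bounded complexity measure -/
structure BCM extends PBCM where
  bdd : ∀ α, α.length ≤ toFun α

/-- extension of ψ to words over pairs `(f_i, δ)` -/
def PBCM.onWord (ψ : PBCM) (α : List (ℕ × ℕ)) : ℕ := ψ.toFun (α.map Prod.fst)

/-- extension of ψ to finite sets of attributes -/
def PBCM.onSet (ψ : PBCM) (s : Finset ℕ) : ℕ := ψ.toFun (s.sort (· ≤ ·))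

/-- the depth `h` -/
def depthCM : BCM where
  toFun := List.length
  pos := fun α => List.length_eq_zero_iff
  perm := fun _ _ h => h.length_eq
  mono := fun α β => by simp
  subadd := fun α β => by simp
  bdd := fun _ => le_rfl

/-- `ψ(Γ)` : complexity of a decision tree -/
def treeComp {k : ℕ} (ψ : PBCM) (Γ : KTree k) : ℕ :=
  sSup {c | ∃ p ∈ Γ.paths, ψ.onWord p.1 = c}

/-- `Γ` is a nondeterministic decision tree for the (nonempty) table `T` -/
def isNDT {k : ℕ} (T : Table k) (Γ : KTree k) : Prop :=
  T.rows.Nonempty ∧ Γ.wf ∧ Γ.attrs ⊆ T.attrs ∧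
  (∀ r ∈ T.rows, ∃ p ∈ Γ.paths, Table.rowSat r p.1) ∧
  (∀ p ∈ Γ.paths, (T.applyWord p.1).rows = ∅ ∨ ∀ r ∈ (T.applyWord p.1).rows, p.2 ∈ T.dec r)

/-- `Γ` is a deterministic decision tree for `T` -/
def isDDT {k : ℕ} (T : Table k) (Γ : KTree k) : Prop :=
  isNDT T Γ ∧ Γ.n = 0 ∧ ∀ i, (Γ.sub i).det

/-- `ψ^a(T)` -/
def psiA {k : ℕ} (ψ : PBCM) (T : Table k) : ℕ :=
  sInf {c | ∃ Γ : KTree k, isNDT T Γ ∧ treeComp ψ Γ = c}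

/-- `ψ^d(T)` -/
def psiD {k : ℕ} (ψ : PBCM) (T : Table k) : ℕ :=
  sInf {c | ∃ Γ : KTree k, isDDT T Γ ∧ treeComp ψ Γ = c}

/-- `m_ψ(T)` -/
def mpsi {k : ℕ} (ψ : PBCM) (T : Table k) : ℕ :=
  if T.rows = ∅ then 0 else T.attrs.sup fun i => ψ.toFun [i]

/-- `W_ψ(T)` -/
def Wpsi {k : ℕ} (ψ : PBCM) (T : Table k) : ℕ :=
  if T.rows = ∅ then 0 else ψ.onSet T.attrs

/-- a tuple `δ̄ ∈ E_k^{|At(T)|}` -/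
def validTuple {k : ℕ} (T : Table k) (δ : ℕ → ℕ) : Prop :=
  (∀ i ∈ T.attrs, δ i < k) ∧ ∀ i ∉ T.attrs, δ i = 0

/-- `M_ψ(T, δ̄)` -/
def MpsiAt {k : ℕ} (ψ : PBCM) (T : Table k) (δ : ℕ → ℕ) : ℕ :=
  sInf {p | ∃ s : Finset ℕ, s ⊆ T.attrs ∧
    (T.applyWord ((s.sort (· ≤ ·)).map fun i => (i, δ i))).hasCommon ∧ ψ.onSet s = p}

/-- `M_ψ(T)` -/
def Mpsi {k : ℕ} (ψ : PBCM) (T : Table k) : ℕ :=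
  if T.hasCommon then 0 else sSup {p | ∃ δ, validTuple T δ ∧ MpsiAt ψ T δ = p}

/-- `U` is a `(ψ,n)`-cover of `T` -/
def isCover {k : ℕ} (ψ : PBCM) (n : ℕ) (T : Table k) (U : Finset (List (ℕ × ℕ))) : Prop :=
  (∀ α ∈ U, T.wordOk α ∧ ψ.onWord α ≤ n) ∧ ∀ r ∈ T.rows, ∃ α ∈ U, Table.rowSat r α

/-- `U` is an irreducible `(ψ,n)`-cover of `T` -/
def isIrredCover {k : ℕ} (ψ : PBCM) (n : ℕ) (T : Table k) (U : Finset (List (ℕ × ℕ))) : Prop :=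
  isCover ψ n T U ∧ ∀ V ⊂ U, ¬ isCover ψ n T V

/-- `l_ψ(T,n)` : maximum cardinality of an irreducible `(ψ,n)`-cover -/
def lpsi {k : ℕ} (ψ : PBCM) (T : Table k) (n : ℕ) : ℕ :=
  sSup {c | ∃ U, isIrredCover ψ n T U ∧ U.card = c}

/-- the set `{ψ^d(T) : T ∈ A, ψ^a(T) ≤ n}`; `H^∞_{ψ,A}(n)` is defined iff this set
is finite, and is then its maximum -/
def HSet {k : ℕ} (ψ : PBCM) (A : Set (Table k)) (n : ℕ) : Set ℕ :=
  {c | ∃ T ∈ A, psiA ψ T ≤ n ∧ psiD ψ T = c}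

/-- `H^∞_{ψ,A}(n)` (as the max = sSup of the finite set `HSet ψ A n`) -/
def Hfun {k : ℕ} (ψ : PBCM) (A : Set (Table k)) (n : ℕ) : ℕ := sSup (HSet ψ A n)

/-- the set `{l_ψ(T,n) : T ∈ A}` -/
def LSet {k : ℕ} (ψ : PBCM) (A : Set (Table k)) (n : ℕ) : Set ℕ :=
  {c | ∃ T ∈ A, lpsi ψ T n = c}

/-- `L_{ψ,A}(n)` -/
def Lfun {k : ℕ} (ψ : PBCM) (A : Set (Table k)) (n : ℕ) : ℕ := sSup (LSet ψ A n)

/-- `H_D` for an infinite `D ⊆ ℕ` : `H_D(n)` is the largest element of `D` that is `≤ n`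
(and `0` if there is none) -/
def HDfun (D : Set ℕ) (n : ℕ) : ℕ := sSup {d | d ∈ D ∧ d ≤ n}

/-- a complete table from `M_2^∞` -/
def isComplete (Q : Table 2) : Prop := Q.NT = 2 ^ Q.attrs.card

/-- `Z(T)` : maximum number of columns in a complete table from `[T]` (`0` if none) -/
def Zt (T : Table 2) : ℕ := sSup {c | ∃ Q ∈ Table.closureT T, isComplete Q ∧ Q.WT = c}

/-- the set `{Z(T) : T ∈ A_ψ(n)}` -/
def ZSet (ψ : PBCM) (A : Set (Table 2)) (n : ℕ) : Set ℕ :=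
  {c | ∃ T ∈ A, mpsi ψ T ≤ n ∧ Zt T = c}

/-- `Z_{ψ,A}(n)` -/
def Zfun (ψ : PBCM) (A : Set (Table 2)) (n : ℕ) : ℕ := sSup (ZSet ψ A n)

/-- annihilating word for `T` -/
def isAnnih (T : Table 2) (α : List (ℕ × ℕ)) : Prop :=
  T.wordOk α ∧ (∀ p ∈ α, ∀ q ∈ α, p.1 = q.1 → p.2 = q.2) ∧ (T.applyWord α).rows = ∅

/-- irreducible annihilating word for `T` -/
def isIrredAnnih (T : Table 2) (α : List (ℕ × ℕ)) : Prop :=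
  isAnnih T α ∧ ∀ β, β.Sublist α → β ≠ α → ¬ isAnnih T β

/-- `G(T)` : maximum length of an irreducible annihilating word (`0` if none) -/
def Gt (T : Table 2) : ℕ := sSup {c | ∃ α, isIrredAnnih T α ∧ α.length = c}

/-- the set `{G(T) : T ∈ A_ψ(n)}` -/
def GSet (ψ : PBCM) (A : Set (Table 2)) (n : ℕ) : Set ℕ :=
  {c | ∃ T ∈ A, mpsi ψ T ≤ n ∧ Gt T = c}

/-- `G_{ψ,A}(n)` -/
def Gfun (ψ : PBCM) (A : Set (Table 2)) (n : ℕ) : ℕ := sSup (GSet ψ A n)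

/-! ### The tables `T_k` and `T_k^*` built from the triangle-shaped graph `G_k` -/

/-- `m(k) = k(k+1)/2` : number of nodes of `G_k` -/
def mnum (k : ℕ) : ℕ := k * (k + 1) / 2

/-- the layer of node `i` of `G_k` : the unique `L` with `m(L-1) < i ≤ m(L)` -/
def layer (i : ℕ) : ℕ := sInf {L | i ≤ mnum L}

/-- left child `l(i) = i + layer i`; right child `p(i) = i + layer i + 1` -/
def lchild (i : ℕ) : ℕ := i + layer i

def rchild (i : ℕ) : ℕ := i + layer i + 1

/-- the map `ν_k : E_2^{m(k)} → P(ω)` -/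
def nuk (k : ℕ) (δ : ℕ → ℕ) : Finset ℕ :=
  (Finset.range (mnum k + 1)).filter fun i =>
    if i = 0 then δ 1 = 0
    else if layer i = k then δ i = 1
    else δ i = 1 ∧ δ (lchild i) = 0 ∧ δ (rchild i) = 0

/-- all tuples over `E_k` supported on the attribute set `s` -/
def allRows (k : ℕ) (s : Finset ℕ) : Finset (ℕ → ℕ) :=
  (s.pi fun _ => Finset.range k).image fun f i => if h : i ∈ s then f i h else 0

/-- the table with attribute set `s`, all possible rows, and decision labeling `d` -/
def fullTable (k : ℕ) (s : Finset ℕ) (d : (ℕ → ℕ) → Finset ℕ) : Table k where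
  attrs := s
  rows := allRows k s
  dec := fun r => if (d r).Nonempty then d r else {0}
  rows_mem := by
    intro r hr
    simp only [allRows, Finset.mem_image] at hr
    obtain ⟨f, hf, rfl⟩ := hr
    refine ⟨fun i hi => ?_, fun i hi => ?_⟩
    · have h := (Finset.mem_pi.mp hf) i hi
      simp only [Finset.mem_range] at h
      simpa [hi] using h
    · simp [hi]
  dec_nonempty := by
    intro r _
    by_cases h : (d r).Nonempty
    · simp [h]
    · simp [h]

/-- the complete table `T_k` with `m(k)` columns `f_1, …, f_{m(k)}` and `2^{m(k)}` rows,
each row `δ̄` labeled with `ν_k(δ̄)` (which is always nonempty) -/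
def Tk (k : ℕ) : Table 2 := fullTable 2 (Finset.Icc 1 (mnum k)) (nuk k)

/-- the `j`-th node of the complete path of `G_k` determined by the choices `c` -/
def pathNode (c : ℕ → Bool) : ℕ → ℕ
  | 0 => 1
  | j + 1 => if c j then lchild (pathNode c j) else rchild (pathNode c j)

/-- `T_k^*` : the subtable of `T_k` whose rows are exactly the characteristic tuples
of complete paths of `G_k` -/
def Tstar (k : ℕ) : Table 2 where
  attrs := (Tk k).attrs
  rows := (Tk k).rows.filter fun r =>
    ∃ c : ℕ → Bool, ∀ i ∈ Finset.Icc 1 (mnum k), (r i = 1 ↔ ∃ j < k, pathNode c j = i)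
  dec := (Tk k).dec
  rows_mem := fun r hr => (Tk k).rows_mem r (Finset.mem_filter.mp hr).1
  dec_nonempty := fun r hr => (Tk k).dec_nonempty r (Finset.mem_filter.mp hr).1

/-- `r(T)` for a subtable `T` of `T_k^*` : the number of distinct decision sets
`ν_k(δ̄)` among the rows `δ̄` of `T` -/
def rnum (k : ℕ) (T : Table 2) : ℕ := (T.rows.image (nuk k)).card

end

/-!
If `l_ψ(T, n) ≤ C`, then from an optimal nondeterministic tree of complexity `≤ n` one extracts
an irreducible `(ψ, n)`-cover with at most `C` words, each fixing a subtable with a common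
decision; the deterministic tree asking all attributes of these words has complexity `≤ C n`.

Conversely, an irreducible cover `U` of `T ∈ A` gives, after relabelling each row by the words
of `U` it satisfies, a table of `A` with nondeterministic complexity `≤ n`. Every word of `U`
has a row covered by it alone, and such rows need distinct leaves of any deterministic tree.
If `ψ^d ≤ C` on such tables, the tree has depth `≤ C` because `ψ` is bounded, hence at most
`k ^ C` leaves, so `|U| ≤ k ^ C`.
-/

namespace DTree

variable {k : ℕ}

lemma paths_finite : ∀ t : DTree k, t.paths.Finite
  | leaf _ => Set.finite_singleton _
  | node _ _ _ ch => Set.finite_iUnion fun i => (paths_finite (ch i)).image _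

lemma paths_nonempty : ∀ t : DTree k, t.paths.Nonempty
  | leaf d => ⟨([], d), rfl⟩
  | node _ _ _ ch =>
      let ⟨p, hp⟩ := paths_nonempty (ch 0)
      ⟨_, Set.mem_iUnion.mpr ⟨0, p, hp, rfl⟩⟩

lemma mem_attrs_of_mem_paths : ∀ {t : DTree k}, t.wf → ∀ {p}, p ∈ t.paths →
    ∀ q ∈ p.1, q.1 ∈ t.attrs ∧ q.2 < k
  | leaf _, _, p, hp, q, hq => by
      obtain rfl : p = ([], _) := hp
      simp at hq
  | node a _ lab ch, ⟨hlab, hwf⟩, _, hp, q, hq => by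
      obtain ⟨i, p', hp', rfl⟩ := Set.mem_iUnion.mp hp
      rcases List.mem_cons.mp hq with rfl | hq
      · exact ⟨Finset.mem_insert_self _ _, hlab i⟩
      · obtain ⟨hqa, hqk⟩ := mem_attrs_of_mem_paths (hwf i) hp' q hq
        exact ⟨Finset.mem_insert_of_mem (Finset.mem_biUnion.mpr ⟨i, Finset.mem_univ _, hqa⟩), hqk⟩

/-- A deterministic tree branches at most `k` ways at each node. -/
lemma ncard_paths_le_pow (hk : 1 ≤ k) : ∀ {t : DTree k} {h : ℕ}, t.wf → t.det →
    (∀ p ∈ t.paths, p.1.length ≤ h) → t.paths.ncard ≤ k ^ h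
  | leaf _, h, _, _, _ => by simpa [paths] using Nat.one_le_pow h k hk
  | node a n lab ch, 0, _, _, hlen => by
      obtain ⟨p, hp⟩ := paths_nonempty (node a n lab ch)
      obtain ⟨i, p', -, rfl⟩ := Set.mem_iUnion.mp hp
      simpa using hlen _ hp
  | node a n lab ch, h + 1, ⟨hlab, hwf⟩, ⟨hinj, hdet⟩, hlen => by
      have hchild (i) : (ch i).paths.ncard ≤ k ^ h :=
        ncard_paths_le_pow hk (hwf i) (hdet i) fun p hp => by
          simpa using hlen _ (Set.mem_iUnion.mpr ⟨i, p, hp, rfl⟩)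
      have hbranch : n + 1 ≤ k := by
        simpa using Fintype.card_le_of_injective (fun i => (⟨lab i, hlab i⟩ : Fin k))
          fun i j hij => hinj (congrArg Fin.val hij)
      calc (node a n lab ch).paths.ncard
          ≤ ∑ i, ((fun p : List (ℕ × ℕ) × ℕ => ((a, lab i) :: p.1, p.2)) ''
              (ch i).paths).ncard := by
            simpa [paths] using Finset.set_ncard_biUnion_le Finset.univ fun i =>
              (fun p : List (ℕ × ℕ) × ℕ => ((a, lab i) :: p.1, p.2)) '' (ch i).paths
        _ ≤ ∑ _i : Fin (n + 1), k ^ h :=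
            Finset.sum_le_sum fun i _ => (Set.ncard_image_le (paths_finite _)).trans (hchild i)
        _ ≤ k ^ (h + 1) := by
            rw [Finset.sum_const, Finset.card_univ, Fintype.card_fin, smul_eq_mul, pow_succ']
            exact Nat.mul_le_mul_right _ hbranch

def chain : List (ℕ × ℕ) → ℕ → DTree k
  | [], d => leaf d
  | q :: α, d => node q.1 0 (fun _ => q.2) fun _ => chain α d

lemma mem_paths_chain : ∀ {α : List (ℕ × ℕ)} {d : ℕ} {p : List (ℕ × ℕ) × ℕ},
    p ∈ (chain α d : DTree k).paths ↔ p = (α, d)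
  | [], _, _ => Iff.rfl
  | q :: α, d, p => by
      simp only [chain, paths, Set.mem_iUnion, Set.mem_image, mem_paths_chain]
      constructor
      · rintro ⟨-, _, rfl, rfl⟩
        rfl
      · rintro rfl
        exact ⟨0, _, rfl, rfl⟩

lemma wf_chain : ∀ {α : List (ℕ × ℕ)} {d : ℕ}, (∀ q ∈ α, q.2 < k) → (chain α d : DTree k).wf
  | [], _, _ => trivial
  | q :: _, _, h => ⟨fun _ => h q List.mem_cons_self,
      fun _ => wf_chain fun q' hq' => h q' (List.mem_cons_of_mem _ hq')⟩

lemma attrs_chain : ∀ {α : List (ℕ × ℕ)} {d : ℕ},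
    (chain α d : DTree k).attrs ⊆ (α.map Prod.fst).toFinset
  | [], _ => by simp [chain, attrs]
  | q :: _, _ => by
      simp only [chain, attrs, List.map_cons, List.toFinset_cons]
      exact Finset.insert_subset_insert _ (Finset.biUnion_subset.mpr fun _ _ => attrs_chain)

/-- The complete tree asking the attributes of `L` in turn; the leaf reached by the
answers `β` is labelled `d β`. -/
def query (d : List (ℕ × ℕ) → ℕ) : List ℕ → DTree k
  | [] => leaf (d [])
  | a :: L => node a (k - 1) (fun i => i) fun i => query (fun β => d ((a, i) :: β)) L

lemma wf_query (hk : 1 ≤ k) : ∀ {d : List (ℕ × ℕ) → ℕ} {L : List ℕ}, (query d L : DTree k).wf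
  | _, [] => trivial
  | _, _ :: _ => ⟨fun i => show (i : ℕ) < k by have := i.isLt; omega, fun _ => wf_query hk⟩

lemma det_query : ∀ {d : List (ℕ × ℕ) → ℕ} {L : List ℕ}, (query d L : DTree k).det
  | _, [] => trivial
  | _, _ :: _ => ⟨fun _ _ h => Fin.ext h, fun _ => det_query⟩

lemma attrs_query : ∀ {d : List (ℕ × ℕ) → ℕ} {L : List ℕ},
    (query d L : DTree k).attrs ⊆ L.toFinset
  | _, [] => by simp [query, attrs]
  | _, a :: L => by
      simp only [query, attrs, List.toFinset_cons]
      exact Finset.insert_subset_insert _ (Finset.biUnion_subset.mpr fun _ _ => attrs_query)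

lemma mem_paths_query {d : List (ℕ × ℕ) → ℕ} {L : List ℕ} {p : List (ℕ × ℕ) × ℕ}
    (hp : p ∈ (query d L : DTree k).paths) : p.1.map Prod.fst = L ∧ p.2 = d p.1 := by
  induction L generalizing d p with
  | nil =>
      obtain rfl := hp
      simp
  | cons a L ih =>
      obtain ⟨i, p', hp', rfl⟩ := Set.mem_iUnion.mp hp
      obtain ⟨hL, hd⟩ := ih hp'
      exact ⟨by simp [hL], hd⟩

lemma exists_mem_paths_query {r : ℕ → ℕ} : ∀ {d : List (ℕ × ℕ) → ℕ} {L : List ℕ},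
    (∀ a ∈ L, r a < k) → ∃ p ∈ (query d L : DTree k).paths, Table.rowSat r p.1
  | d, [], _ => ⟨([], d []), rfl, by simp [Table.rowSat]⟩
  | _, a :: L, hr => by
      have ha : r a < k - 1 + 1 := by have := hr a List.mem_cons_self; omega
      obtain ⟨p, hp, hsat⟩ :=
        exists_mem_paths_query (L := L) fun b hb => hr b (List.mem_cons_of_mem _ hb)
      refine ⟨((a, r a) :: p.1, p.2), Set.mem_iUnion.mpr ⟨⟨r a, ha⟩, p, hp, rfl⟩, ?_⟩
      simpa [Table.rowSat] using hsat

end DTree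

namespace KTree

variable {k : ℕ}

def single (t : DTree k) : KTree k := ⟨0, fun _ => t⟩

def chains (d : List (ℕ × ℕ) → ℕ) (α : List (ℕ × ℕ)) (αs : List (List (ℕ × ℕ))) : KTree k :=
  ⟨αs.length, fun i => DTree.chain ((α :: αs).get i) (d ((α :: αs).get i))⟩

lemma paths_finite (Γ : KTree k) : Γ.paths.Finite :=
  Set.finite_iUnion fun i => (Γ.sub i).paths_finite

@[simp]
lemma paths_single (t : DTree k) : (single t).paths = t.paths :=
  Set.iUnion_const t.paths

@[simp]
lemma attrs_single (t : DTree k) : (single t).attrs = t.attrs := by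
  ext
  simp only [single, attrs, Finset.mem_biUnion]
  exact ⟨fun ⟨_, _, h⟩ => h, fun h => ⟨0, Finset.mem_univ _, h⟩⟩

lemma mem_paths_chains {d : List (ℕ × ℕ) → ℕ} {α : List (ℕ × ℕ)} {αs : List (List (ℕ × ℕ))}
    {p : List (ℕ × ℕ) × ℕ} :
    p ∈ (chains d α αs : KTree k).paths ↔ p.1 ∈ α :: αs ∧ p.2 = d p.1 := by
  simp only [paths, chains, Set.mem_iUnion, DTree.mem_paths_chain, List.mem_iff_get]
  constructor
  · rintro ⟨i, rfl⟩
    exact ⟨⟨i, rfl⟩, rfl⟩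
  · rintro ⟨⟨i, hi⟩, hd⟩
    exact ⟨i, Prod.ext hi.symm (by rw [hd, ← hi])⟩

end KTree

namespace Table

variable {k : ℕ} {T : Table k}

lemma mem_rows_applyWord {β : List (ℕ × ℕ)} {r : ℕ → ℕ} :
    r ∈ (T.applyWord β).rows ↔ r ∈ T.rows ∧ rowSat r β :=
  Finset.mem_filter

lemma hasCommon_of_rows_eq_empty (h : T.rows = ∅) : T.hasCommon :=
  ⟨0, by simp [h]⟩

lemma hasCommon_applyWord_of_imp {α β : List (ℕ × ℕ)} (h : (T.applyWord α).hasCommon)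
    (himp : ∀ r ∈ T.rows, rowSat r β → rowSat r α) : (T.applyWord β).hasCommon := by
  obtain ⟨d, hd⟩ := h
  refine ⟨d, fun r hr => ?_⟩
  obtain ⟨hrT, hrβ⟩ := mem_rows_applyWord.mp hr
  exact hd r (mem_rows_applyWord.mpr ⟨hrT, himp r hrT hrβ⟩)

lemma rowSat_of_agree {r r₀ : ℕ → ℕ} {α β : List (ℕ × ℕ)}
    (hαβ : ∀ q ∈ α, q.1 ∈ β.map Prod.fst) (h₀α : rowSat r₀ α) (h₀β : rowSat r₀ β)
    (hβ : rowSat r β) : rowSat r α := by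
  intro q hq
  obtain ⟨q', hq', hqq'⟩ := List.mem_map.mp (hαβ q hq)
  rw [← h₀α q hq, ← hqq', hβ q' hq', h₀β q' hq']

lemma hasCommon_applyWord_of_attrs_subset {β : List (ℕ × ℕ)}
    (h : ∀ a ∈ T.attrs, a ∈ β.map Prod.fst) : (T.applyWord β).hasCommon := by
  rcases (T.applyWord β).rows.eq_empty_or_nonempty with he | ⟨r₀, hr₀⟩
  · exact hasCommon_of_rows_eq_empty he
  obtain ⟨d, hd⟩ := (T.applyWord β).dec_nonempty r₀ hr₀
  refine ⟨d, fun r hr => ?_⟩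
  obtain ⟨hrT, hrβ⟩ := mem_rows_applyWord.mp hr
  obtain ⟨hr₀T, hr₀β⟩ := mem_rows_applyWord.mp hr₀
  suffices r = r₀ from this ▸ hd
  funext a
  by_cases ha : a ∈ T.attrs
  · obtain ⟨q, hq, rfl⟩ := List.mem_map.mp (h a ha)
    rw [hrβ q hq, hr₀β q hq]
  · rw [(T.rows_mem r hrT).2 a ha, (T.rows_mem r₀ hr₀T).2 a ha]

noncomputable def commonDec (T : Table k) (β : List (ℕ × ℕ)) : ℕ :=
  if h : (T.applyWord β).hasCommon then h.choose else 0

lemma commonDec_mem {β : List (ℕ × ℕ)} {r : ℕ → ℕ} (h : (T.applyWord β).hasCommon)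
    (hr : r ∈ (T.applyWord β).rows) : T.commonDec β ∈ T.dec r := by
  rw [commonDec, dif_pos h]
  exact h.choose_spec r hr

/-- The table `J(d, T)`. -/
def relabel (T : Table k) (d : (ℕ → ℕ) → Finset ℕ) (hd : ∀ r ∈ T.rows, (d r).Nonempty) :
    Table k :=
  { T with dec := d, dec_nonempty := hd }

lemma relabel_mem_closureT {d : (ℕ → ℕ) → Finset ℕ} (hd : ∀ r ∈ T.rows, (d r).Nonempty) :
    T.relabel d hd ∈ T.closureT := by
  refine ⟨∅, Finset.empty_subset _, (Finset.sdiff_empty).symm, ?_⟩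
  refine (Finset.image_congr fun r hr => ?_).trans Finset.image_id |>.symm
  funext i
  by_cases hi : i ∈ T.attrs
  · simp [hi]
  · simp [hi, (T.rows_mem r hr).2 i hi]

end Table

open Table

section TreesForTables

variable {k : ℕ} {T : Table k} {Γ : KTree k}

lemma le_treeComp (ψ : PBCM) {p : List (ℕ × ℕ) × ℕ} (hp : p ∈ Γ.paths) :
    ψ.onWord p.1 ≤ treeComp ψ Γ :=
  le_csSup ((Γ.paths_finite.image fun p : List (ℕ × ℕ) × ℕ => ψ.onWord p.1).bddAbove) ⟨p, hp, rfl⟩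

lemma treeComp_le {ψ : PBCM} {b : ℕ} (h : ∀ p ∈ Γ.paths, ψ.onWord p.1 ≤ b) :
    treeComp ψ Γ ≤ b :=
  csSup_le' fun _ ⟨p, hp, hc⟩ => hc ▸ h p hp

lemma isNDT.wordOk (hΓ : isNDT T Γ) {p : List (ℕ × ℕ) × ℕ} (hp : p ∈ Γ.paths) :
    T.wordOk p.1 := by
  intro q hq
  obtain ⟨i, hpi⟩ := Set.mem_iUnion.mp hp
  obtain ⟨hqa, hqk⟩ := DTree.mem_attrs_of_mem_paths (hΓ.2.1 i) hpi q hq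
  exact ⟨hΓ.2.2.1 (Finset.mem_biUnion.mpr ⟨i, Finset.mem_univ _, hqa⟩), hqk⟩

lemma isNDT.dec_mem (hΓ : isNDT T Γ) {p : List (ℕ × ℕ) × ℕ} (hp : p ∈ Γ.paths) {r : ℕ → ℕ}
    (hr : r ∈ T.rows) (hrp : rowSat r p.1) : p.2 ∈ T.dec r := by
  have hrTp : r ∈ (T.applyWord p.1).rows := mem_rows_applyWord.mpr ⟨hr, hrp⟩
  rcases hΓ.2.2.2.2 p hp with he | hcom
  · simp [he] at hrTp
  · exact hcom r hrTp

/-- Rows with pairwise disjoint decision sets must reach pairwise different leaves. -/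
lemma isNDT.card_le_ncard_paths (hΓ : isNDT T Γ) {S : Finset (ℕ → ℕ)} (hS : S ⊆ T.rows)
    (hdisj : (S : Set (ℕ → ℕ)).PairwiseDisjoint T.dec) : S.card ≤ Γ.paths.ncard := by
  choose! P hP hsat using fun r (hr : r ∈ S) => hΓ.2.2.2.1 r (hS hr)
  rw [← Set.ncard_coe_finset]
  refine Set.ncard_le_ncard_of_injOn P (fun r hr => hP r hr) (fun r hr r' hr' hPr => ?_)
    Γ.paths_finite
  by_contra hne
  have hdec := hΓ.dec_mem (hP r hr) (hS hr) (hsat r hr)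
  have hdec' := hΓ.dec_mem (hP r' hr') (hS hr') (hsat r' hr')
  rw [← hPr] at hdec'
  exact Finset.disjoint_left.mp (hdisj hr hr' hne) hdec hdec'

lemma isDDT.ncard_paths_le (hk : 1 ≤ k) (hΓ : isDDT T Γ) {h : ℕ}
    (hlen : ∀ p ∈ Γ.paths, p.1.length ≤ h) : Γ.paths.ncard ≤ k ^ h := by
  obtain ⟨n, sub⟩ := Γ
  obtain ⟨hΓ, rfl, hdet⟩ := hΓ
  have hpaths : KTree.paths ⟨0, sub⟩ = (sub 0).paths := by
    ext p
    simp [KTree.paths, Fin.exists_fin_one]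
  rw [hpaths] at hlen ⊢
  exact DTree.ncard_paths_le_pow hk (hΓ.2.1 0) (hdet 0) hlen

end TreesForTables

lemma PBCM.toFun_flatten_le (ψ : PBCM) {n : ℕ} :
    ∀ {ws : List (List ℕ)}, (∀ w ∈ ws, ψ.toFun w ≤ n) → ψ.toFun ws.flatten ≤ ws.length * n
  | [], _ => by simp [(ψ.pos []).mpr rfl]
  | w :: ws, h =>
      calc ψ.toFun (w ++ ws.flatten) ≤ ψ.toFun w + ψ.toFun ws.flatten := ψ.subadd _ _
        _ ≤ n + ws.length * n := add_le_add (h w List.mem_cons_self)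
            (toFun_flatten_le ψ fun w' hw' => h w' (List.mem_cons_of_mem _ hw'))
        _ = (w :: ws).length * n := by rw [List.length_cons]; ring

section Covers

variable {k : ℕ} {ψ : PBCM} {n : ℕ} {T : Table k} {U : Finset (List (ℕ × ℕ))}

lemma exists_isIrredCover_subset (hU : isCover ψ n T U) : ∃ V ⊆ U, isIrredCover ψ n T V := by
  obtain ⟨V, hV, hmin⟩ := Finset.exists_min_image (U.powerset.filter (isCover ψ n T)) Finset.card
    ⟨U, Finset.mem_filter.mpr ⟨Finset.mem_powerset_self U, hU⟩⟩
  obtain ⟨hVU, hVcov⟩ := Finset.mem_filter.mp hV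
  refine ⟨V, Finset.mem_powerset.mp hVU, hVcov, fun W hWV hWcov => ?_⟩
  have hW : W ∈ U.powerset.filter (isCover ψ n T) :=
    Finset.mem_filter.mpr ⟨Finset.mem_powerset.mpr (hWV.subset.trans (Finset.mem_powerset.mp hVU)),
      hWcov⟩
  exact (hmin W hW).not_gt (Finset.card_lt_card hWV)

lemma isIrredCover.exists_row_unique (hU : isIrredCover ψ n T U) {α : List (ℕ × ℕ)}
    (hα : α ∈ U) : ∃ r ∈ T.rows, rowSat r α ∧ ∀ β ∈ U, rowSat r β → β = α := by
  by_contra! hcon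
  refine hU.2 (U.erase α) (Finset.erase_ssubset hα)
    ⟨fun β hβ => hU.1.1 β (Finset.mem_of_mem_erase hβ), fun r hr => ?_⟩
  obtain ⟨β, hβ, hrβ⟩ := hU.1.2 r hr
  by_cases hβα : β = α
  · obtain ⟨γ, hγ, hrγ, hγα⟩ := hcon r hr (hβα ▸ hrβ)
    exact ⟨γ, Finset.mem_erase.mpr ⟨hγα, hγ⟩, hrγ⟩
  · exact ⟨β, Finset.mem_erase.mpr ⟨hβα, hβ⟩, hrβ⟩

lemma isIrredCover.card_le (hU : isIrredCover ψ n T U) : U.card ≤ T.rows.card := by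
  choose! w hwT hwα hwuniq using fun α (hα : α ∈ U) => hU.exists_row_unique hα
  exact Finset.card_le_card_of_injOn w hwT fun α hα β hβ h =>
    (hwuniq α hα β hβ (h ▸ hwα β hβ)).symm

lemma isIrredCover.card_le_lpsi (hU : isIrredCover ψ n T U) : U.card ≤ lpsi ψ T n :=
  le_csSup ⟨T.rows.card, fun _ ⟨_, hV, hc⟩ => hc ▸ hV.card_le⟩ ⟨U, hU, rfl⟩

lemma lpsi_le {b : ℕ} (h : ∀ U, isIrredCover ψ n T U → U.card ≤ b) : lpsi ψ T n ≤ b :=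
  csSup_le' fun _ ⟨U, hU, hc⟩ => hc ▸ h U hU

end Covers

section Complexity

variable {k : ℕ} {T : Table k}

lemma isDDT_single_query (hk : 1 ≤ k) (hT : T.rows.Nonempty) {L : List ℕ}
    (hL : ∀ a ∈ L, a ∈ T.attrs)
    (hcom : ∀ β : List (ℕ × ℕ), β.map Prod.fst = L → (T.applyWord β).hasCommon) :
    isDDT T (KTree.single (DTree.query T.commonDec L)) := by
  refine ⟨⟨hT, fun _ => DTree.wf_query hk, ?_, fun r hr => ?_, fun p hp => Or.inr fun r hr => ?_⟩,
    rfl, fun _ => DTree.det_query⟩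
  · rw [KTree.attrs_single]
    exact DTree.attrs_query.trans fun a ha => hL a (List.mem_toFinset.mp ha)
  · rw [KTree.paths_single]
    exact DTree.exists_mem_paths_query fun a ha => (T.rows_mem r hr).1 a (hL a ha)
  · rw [KTree.paths_single] at hp
    obtain ⟨hpL, hpd⟩ := DTree.mem_paths_query hp
    exact hpd ▸ commonDec_mem (hcom p.1 hpL) hr

lemma treeComp_single_query_le (ψ : PBCM) {d : List (ℕ × ℕ) → ℕ} {L : List ℕ} :
    treeComp ψ (KTree.single (DTree.query d L : DTree k)) ≤ ψ.toFun L :=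
  treeComp_le fun p hp => by
    rw [KTree.paths_single] at hp
    rw [PBCM.onWord, (DTree.mem_paths_query hp).1]

lemma psiD_le_of_forall_hasCommon (hk : 1 ≤ k) (ψ : PBCM) (hT : T.rows.Nonempty) {L : List ℕ}
    (hL : ∀ a ∈ L, a ∈ T.attrs)
    (hcom : ∀ β : List (ℕ × ℕ), β.map Prod.fst = L → (T.applyWord β).hasCommon) :
    psiD ψ T ≤ ψ.toFun L :=
  calc psiD ψ T ≤ treeComp ψ (KTree.single (DTree.query T.commonDec L)) :=
        Nat.sInf_le ⟨_, isDDT_single_query hk hT hL hcom, rfl⟩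
    _ ≤ ψ.toFun L := treeComp_single_query_le ψ

lemma exists_isDDT (hk : 1 ≤ k) (hT : T.rows.Nonempty) : ∃ Γ : KTree k, isDDT T Γ :=
  ⟨_, isDDT_single_query (L := T.attrs.sort (· ≤ ·)) hk hT (fun _ ha => (Finset.mem_sort _).mp ha)
    fun _ hβ => hasCommon_applyWord_of_attrs_subset fun _ ha => hβ ▸ (Finset.mem_sort _).mpr ha⟩

lemma exists_isDDT_treeComp_eq_psiD (hk : 1 ≤ k) (ψ : PBCM) (hT : T.rows.Nonempty) :
    ∃ Γ : KTree k, isDDT T Γ ∧ treeComp ψ Γ = psiD ψ T := by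
  obtain ⟨Γ, hΓ⟩ := exists_isDDT hk hT
  exact Nat.sInf_mem (s := {c | ∃ Γ : KTree k, isDDT T Γ ∧ treeComp ψ Γ = c}) ⟨_, Γ, hΓ, rfl⟩

lemma exists_isNDT_treeComp_eq_psiA (hk : 1 ≤ k) (ψ : PBCM) (hT : T.rows.Nonempty) :
    ∃ Γ : KTree k, isNDT T Γ ∧ treeComp ψ Γ = psiA ψ T := by
  obtain ⟨Γ, hΓ⟩ := exists_isDDT hk hT
  exact Nat.sInf_mem (s := {c | ∃ Γ : KTree k, isNDT T Γ ∧ treeComp ψ Γ = c}) ⟨_, Γ, hΓ.1, rfl⟩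

end Complexity

section CoversAndComplexity

variable {k : ℕ} {ψ : PBCM} {n : ℕ} {T : Table k} {U : Finset (List (ℕ × ℕ))}

lemma psiA_le_of_isCover (hT : T.rows.Nonempty) (hU : isCover ψ n T U)
    (hcom : ∀ α ∈ U, (T.applyWord α).hasCommon) : psiA ψ T ≤ n := by
  obtain ⟨r₀, hr₀⟩ := hT
  obtain ⟨α, αs, hUα⟩ : ∃ α αs, U.toList = α :: αs := by
    obtain ⟨β, hβ, -⟩ := hU.2 r₀ hr₀
    exact List.exists_cons_of_ne_nil (List.ne_nil_of_mem (Finset.mem_toList.mpr hβ))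
  have hmem {β : List (ℕ × ℕ)} : β ∈ α :: αs ↔ β ∈ U := hUα ▸ Finset.mem_toList
  set Γ : KTree k := KTree.chains T.commonDec α αs
  have hpaths {p : List (ℕ × ℕ) × ℕ} : p ∈ Γ.paths ↔ p.1 ∈ U ∧ p.2 = T.commonDec p.1 := by
    rw [KTree.mem_paths_chains, hmem]
  have hget (i : Fin (αs.length + 1)) : T.wordOk ((α :: αs).get i) :=
    (hU.1 _ (hmem.mp (List.get_mem _ _))).1
  have hΓ : isNDT T Γ := by
    refine ⟨⟨r₀, hr₀⟩, fun i => DTree.wf_chain fun q hq => (hget i q hq).2, fun a ha => ?_,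
      fun r hr => ?_, fun p hp => ?_⟩
    · obtain ⟨i, -, hai⟩ := Finset.mem_biUnion.mp ha
      obtain ⟨q, hq, rfl⟩ := List.mem_map.mp (List.mem_toFinset.mp (DTree.attrs_chain hai))
      exact (hget i q hq).1
    · obtain ⟨β, hβ, hrβ⟩ := hU.2 r hr
      exact ⟨(β, T.commonDec β), hpaths.mpr ⟨hβ, rfl⟩, hrβ⟩
    · obtain ⟨hpU, hpd⟩ := hpaths.mp hp
      exact Or.inr fun r hr => hpd ▸ commonDec_mem (hcom _ hpU) hr
  calc psiA ψ T ≤ treeComp ψ Γ := Nat.sInf_le ⟨Γ, hΓ, rfl⟩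
    _ ≤ n := treeComp_le fun p hp => (hU.1 _ (hpaths.mp hp).1).2

lemma exists_isCover_of_psiA_le (hk : 1 ≤ k) (hT : T.rows.Nonempty) (h : psiA ψ T ≤ n) :
    ∃ U, isCover ψ n T U ∧ ∀ α ∈ U, (T.applyWord α).hasCommon := by
  obtain ⟨Γ, hΓ, hΓc⟩ := exists_isNDT_treeComp_eq_psiA hk ψ hT
  have hmem {α : List (ℕ × ℕ)} : α ∈ Γ.paths_finite.toFinset.image Prod.fst ↔
      ∃ p ∈ Γ.paths, p.1 = α := by
    simp
  refine ⟨Γ.paths_finite.toFinset.image Prod.fst, ⟨fun α hα => ?_, fun r hr => ?_⟩,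
    fun α hα => ?_⟩
  · obtain ⟨p, hp, rfl⟩ := hmem.mp hα
    exact ⟨hΓ.wordOk hp, (le_treeComp ψ hp).trans (hΓc ▸ h)⟩
  · obtain ⟨p, hp, hrp⟩ := hΓ.2.2.2.1 r hr
    exact ⟨p.1, hmem.mpr ⟨p, hp, rfl⟩, hrp⟩
  · obtain ⟨p, hp, rfl⟩ := hmem.mp hα
    rcases hΓ.2.2.2.2 p hp with he | hcom
    · exact hasCommon_of_rows_eq_empty he
    · exact ⟨p.2, hcom⟩

/-- Asking all attributes of all words of the cover decides `T`. -/
lemma psiD_le_of_isCover (hk : 1 ≤ k) (hT : T.rows.Nonempty) (hU : isCover ψ n T U)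
    (hcom : ∀ α ∈ U, (T.applyWord α).hasCommon) : psiD ψ T ≤ U.card * n := by
  set L := (U.toList.map fun α => α.map Prod.fst).flatten
  have hmemL {a : ℕ} : a ∈ L ↔ ∃ α ∈ U, a ∈ α.map Prod.fst := by simp [L]
  have hL : ∀ a ∈ L, a ∈ T.attrs := fun a ha => by
    obtain ⟨α, hα, haα⟩ := hmemL.mp ha
    obtain ⟨q, hq, rfl⟩ := List.mem_map.mp haα
    exact ((hU.1 α hα).1 q hq).1
  have hLcom (β : List (ℕ × ℕ)) (hβ : β.map Prod.fst = L) : (T.applyWord β).hasCommon := by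
    rcases (T.applyWord β).rows.eq_empty_or_nonempty with he | ⟨r₀, hr₀⟩
    · exact hasCommon_of_rows_eq_empty he
    obtain ⟨hr₀T, hr₀β⟩ := mem_rows_applyWord.mp hr₀
    obtain ⟨α, hα, hr₀α⟩ := hU.2 r₀ hr₀T
    refine hasCommon_applyWord_of_imp (hcom α hα) fun r _ hrβ => rowSat_of_agree ?_ hr₀α hr₀β hrβ
    exact fun q hq => hβ ▸ hmemL.mpr ⟨α, hα, List.mem_map_of_mem hq⟩
  calc psiD ψ T ≤ ψ.toFun L := psiD_le_of_forall_hasCommon hk ψ hT hL hLcom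
    _ ≤ (U.toList.map fun α => α.map Prod.fst).length * n := by
        refine ψ.toFun_flatten_le fun w hw => ?_
        obtain ⟨α, hα, rfl⟩ := List.mem_map.mp hw
        exact (hU.1 α (Finset.mem_toList.mp hα)).2
    _ = U.card * n := by simp

lemma psiD_le_lpsi_mul (hk : 1 ≤ k) (h : psiA ψ T ≤ n) : psiD ψ T ≤ lpsi ψ T n * n := by
  rcases T.rows.eq_empty_or_nonempty with hT | hT
  · simp [psiD, isDDT, isNDT, hT]
  obtain ⟨U, hU, hcom⟩ := exists_isCover_of_psiA_le hk hT h
  obtain ⟨V, hVU, hV⟩ := exists_isIrredCover_subset hU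
  calc psiD ψ T ≤ V.card * n := psiD_le_of_isCover hk hT hV.1 fun α hα => hcom α (hVU hα)
    _ ≤ lpsi ψ T n * n := Nat.mul_le_mul_right n hV.card_le_lpsi

end CoversAndComplexity

lemma lpsi_le_pow_of_mem_closedClass {k : ℕ} (hk : 1 ≤ k) (ψ : BCM) {A : Set (Table k)}
    (hA : IsClosedClass A) {T : Table k} (hTA : T ∈ A) {n C : ℕ}
    (hC : C ∈ upperBounds (HSet ψ.toPBCM A n)) : lpsi ψ.toPBCM T n ≤ k ^ C := by
  refine lpsi_le fun U hU => ?_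
  rcases T.rows.eq_empty_or_nonempty with hT | hT
  · exact (hU.card_le.trans (by simp [hT])).trans (Nat.zero_le _)
  choose! w hwT hwα hwuniq using fun α (hα : α ∈ U) => hU.exists_row_unique hα
  set Q := T.relabel (fun r => (U.filter (rowSat r)).image Encodable.encode) fun r hr =>
    let ⟨α, hα, hrα⟩ := hU.1.2 r hr
    ⟨_, Finset.mem_image_of_mem _ (Finset.mem_filter.mpr ⟨hα, hrα⟩)⟩
  have hQA : Q ∈ A := hA T hTA (relabel_mem_closureT _)
  have hQa : psiA ψ.toPBCM Q ≤ n := psiA_le_of_isCover hT hU.1 fun α hα =>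
    ⟨Encodable.encode α, fun r hr =>
      Finset.mem_image_of_mem _ (Finset.mem_filter.mpr ⟨hα, (mem_rows_applyWord.mp hr).2⟩)⟩
  obtain ⟨Γ, hΓ, hΓc⟩ := exists_isDDT_treeComp_eq_psiD hk ψ.toPBCM (T := Q) hT
  have hlen : ∀ p ∈ Γ.paths, p.1.length ≤ C := fun p hp =>
    calc p.1.length = (p.1.map Prod.fst).length := (List.length_map _).symm
      _ ≤ ψ.toPBCM.onWord p.1 := ψ.bdd _
      _ ≤ treeComp ψ.toPBCM Γ := le_treeComp _ hp
      _ ≤ C := hΓc ▸ hC ⟨Q, hQA, hQa, rfl⟩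
  have hdec (α) (hα : α ∈ U) : Q.dec (w α) = {Encodable.encode α} := by
    have hfilter : U.filter (rowSat (w α)) = {α} :=
      Finset.eq_singleton_iff_unique_mem.mpr ⟨Finset.mem_filter.mpr ⟨hα, hwα α hα⟩,
        fun β hβ => hwuniq α hα β (Finset.mem_filter.mp hβ).1 (Finset.mem_filter.mp hβ).2⟩
    simp [Q, relabel, hfilter]
  have hwinj : Set.InjOn w U := fun α hα β hβ h => (hwuniq α hα β hβ (h ▸ hwα β hβ)).symm
  have hdisj : (↑(U.image w) : Set (ℕ → ℕ)).PairwiseDisjoint Q.dec := by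
    intro _ hr _ hr' hne
    obtain ⟨α, hα, rfl⟩ := Finset.mem_image.mp hr
    obtain ⟨β, hβ, rfl⟩ := Finset.mem_image.mp hr'
    rw [Function.onFun, hdec α hα, hdec β hβ, Finset.disjoint_singleton]
    exact fun h => hne (Encodable.encode_injective h ▸ rfl)
  calc U.card = (U.image w).card := (Finset.card_image_of_injOn hwinj).symm
    _ ≤ Γ.paths.ncard :=
        hΓ.1.card_le_ncard_paths (Finset.image_subset_iff.mpr fun α hα => hwT α hα) hdisj
    _ ≤ k ^ C := hΓ.ncard_paths_le hk hlen

theorem stmt0_general {k : ℕ} (hk : 2 ≤ k) (ψ : BCM) (A : Set (Table k))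
    (hclosed : IsClosedClass A) :
    (∀ n, (HSet ψ.toPBCM A n).Finite) ↔ (∀ n, (LSet ψ.toPBCM A n).Finite) := by
  have hk₁ : 1 ≤ k := by omega
  constructor
  · intro hH n
    obtain ⟨C, hC⟩ := (hH n).bddAbove
    refine (Set.finite_Iic (k ^ C)).subset ?_
    rintro _ ⟨T, hTA, rfl⟩
    exact lpsi_le_pow_of_mem_closedClass hk₁ ψ hclosed hTA hC
  · intro hL n
    obtain ⟨C, hC⟩ := (hL n).bddAbove
    refine (Set.finite_Iic (C * n)).subset ?_
    rintro _ ⟨T, hTA, hTa, rfl⟩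
    exact (psiD_le_lpsi_mul hk₁ hTa).trans (Nat.mul_le_mul_right n (hC ⟨T, hTA, rfl⟩))

/-- **Theorem 3.** For an integer `k ≥ 2`, a bounded complexity measure `ψ` and a nontrivial
closed class `A ⊆ M_k^∞`, the function `H^∞_{ψ,A}` is everywhere defined if and only if
the function `L_{ψ,A}` is everywhere defined. -/
theorem stmt0 {k : ℕ} (hk : 2 ≤ k) (ψ : BCM) (A : Set (Table k))
    (hclosed : IsClosedClass A) (hnontriv : NontrivialClass A) :
    (∀ n, (HSet ψ.toPBCM A n).Finite) ↔ (∀ n, (LSet ψ.toPBCM A n).Finite) :=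
  stmt0_general hk ψ A hclosed
end

section
/- Let k ≥ 2 be an integer, ψ a bounded complexity measure, A a nontrivial closed class of decision tables from M_k^∞, and suppose the function H^∞_{ψ,A} is everywhere defined. Then H^∞_{ψ,A} is nondecreasing and H^∞_{ψ,A}(0) = 0. Moreover: (a) if the function ψ^d is bounded from above on A, then there exists a constant c ∈ ℕ such that H^∞_{ψ,A}(n) ≤ c for all n ∈ ℕ; (b) if ψ^d is not bounded from above on A, then there exists an infinite subset D of ℕ such that H^∞_{ψ,A}(n) ≥ H_D(n) for all n ∈ ℕ. -/
open Classical

/-! The whole theorem rests on two facts: a deterministic tree is a nondeterministic one, so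
`ψ^a ≤ ψ^d`; and a tree of complexity `0` has only empty paths, so its table has a common
decision and is solved by a single leaf. For (b), take `D` to be the set of values of `ψ^d`
on `A`. -/

lemma DTree.paths_finite_s1 {k : ℕ} : ∀ t : DTree k, t.paths.Finite
  | .leaf _ => Set.finite_singleton _
  | .node _ _ _ ch => Set.finite_iUnion fun i => (paths_finite_s1 (ch i)).image _

lemma KTree.paths_finite_s1 {k : ℕ} (Γ : KTree k) : Γ.paths.Finite :=
  Set.finite_iUnion fun _ => DTree.paths_finite_s1 _

lemma onWord_le_treeComp {k : ℕ} (ψ : PBCM) {Γ : KTree k} {p : List (ℕ × ℕ) × ℕ}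
    (hp : p ∈ Γ.paths) : ψ.onWord p.1 ≤ treeComp ψ Γ :=
  le_csSup (Γ.paths_finite_s1.image (fun p : List (ℕ × ℕ) × ℕ => ψ.onWord p.1)).bddAbove
    ⟨p, hp, rfl⟩

lemma PBCM.eq_nil_of_onWord_eq_zero (ψ : PBCM) {α : List (ℕ × ℕ)} (h : ψ.onWord α = 0) :
    α = [] :=
  List.map_eq_nil_iff.mp ((ψ.pos _).mp h)

def KTree.leaf {k : ℕ} (d : ℕ) : KTree k := ⟨0, fun _ => .leaf d⟩

lemma KTree.paths_leaf {k : ℕ} (d : ℕ) : (KTree.leaf d : KTree k).paths = {([], d)} := by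
  simp [KTree.leaf, KTree.paths, DTree.paths]

lemma treeComp_leaf {k : ℕ} (ψ : PBCM) (d : ℕ) : treeComp ψ (KTree.leaf d : KTree k) = 0 := by
  have hvals : {c | ∃ p ∈ (KTree.leaf d : KTree k).paths, ψ.onWord p.1 = c} = {0} := by
    simp [KTree.paths_leaf, PBCM.onWord, (ψ.pos []).mpr rfl]
  rw [treeComp, hvals, csSup_singleton]

lemma isDDT_leaf {k : ℕ} {T : Table k} (hne : T.rows.Nonempty) {d : ℕ}
    (hd : ∀ r ∈ T.rows, d ∈ T.dec r) : isDDT T (KTree.leaf d) := by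
  refine ⟨⟨hne, fun _ => trivial, by simp [KTree.leaf, KTree.attrs, DTree.attrs], ?_, ?_⟩,
    rfl, fun _ => trivial⟩
  · intro r _
    exact ⟨([], d), by simp [KTree.paths_leaf], by simp [Table.rowSat]⟩
  · intro p hp
    rw [KTree.paths_leaf, Set.mem_singleton_iff] at hp
    subst hp
    exact .inr fun r hr => hd r (Finset.mem_filter.mp hr).1

lemma psiD_eq_zero_of_hasCommon {k : ℕ} (ψ : PBCM) {T : Table k} (hT : T.hasCommon) :
    psiD ψ T = 0 := by
  obtain ⟨d, hd⟩ := hT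
  by_cases hne : T.rows.Nonempty
  · exact Nat.le_zero.mp (Nat.sInf_le ⟨_, isDDT_leaf hne hd, treeComp_leaf ψ d⟩)
  · have hnone : {c | ∃ Γ : KTree k, isDDT T Γ ∧ treeComp ψ Γ = c} = ∅ :=
      Set.eq_empty_of_forall_notMem fun _ ⟨_, hΓ, _⟩ => hne hΓ.1.1
    rw [psiD, hnone, Nat.sInf_empty]

lemma hasCommon_of_isNDT_of_treeComp_eq_zero {k : ℕ} (ψ : PBCM) {T : Table k} {Γ : KTree k}
    (hΓ : isNDT T Γ) (h0 : treeComp ψ Γ = 0) : T.hasCommon := by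
  obtain ⟨⟨r, hr⟩, -, -, hcover, hcorrect⟩ := hΓ
  obtain ⟨p, hp, -⟩ := hcover r hr
  have hnil : p.1 = [] :=
    ψ.eq_nil_of_onWord_eq_zero (Nat.le_zero.mp (h0 ▸ onWord_le_treeComp ψ hp))
  have hall : ∀ r ∈ T.rows, r ∈ (T.applyWord p.1).rows := fun r hr =>
    Finset.mem_filter.mpr ⟨hr, by simp [hnil, Table.rowSat]⟩
  refine ⟨p.2, fun r' hr' => ?_⟩
  rcases hcorrect p hp with hempty | hdec
  · exact absurd (hall r hr) (by simp [hempty])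
  · exact hdec r' (hall r' hr')

lemma psiD_eq_zero_of_psiA_eq_zero {k : ℕ} (ψ : PBCM) {T : Table k} (h : psiA ψ T = 0) :
    psiD ψ T = 0 := by
  rcases Set.eq_empty_or_nonempty {c | ∃ Γ : KTree k, isNDT T Γ ∧ treeComp ψ Γ = c}
    with hnone | hsome
  · have hnone' : {c | ∃ Γ : KTree k, isDDT T Γ ∧ treeComp ψ Γ = c} = ∅ :=
      Set.eq_empty_of_forall_notMem fun c ⟨Γ, hΓ, hc⟩ =>
        (Set.eq_empty_iff_forall_notMem.mp hnone) c ⟨Γ, hΓ.1, hc⟩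
    rw [psiD, hnone', Nat.sInf_empty]
  · obtain ⟨Γ, hΓ, hc⟩ := Nat.sInf_mem hsome
    exact psiD_eq_zero_of_hasCommon ψ
      (hasCommon_of_isNDT_of_treeComp_eq_zero ψ hΓ (hc.trans h))

/-- `psiD` takes the junk value `0` when `T` has no deterministic tree, hence the hypothesis. -/
lemma psiA_le_psiD_of_ne_zero {k : ℕ} (ψ : PBCM) {T : Table k} (h : psiD ψ T ≠ 0) :
    psiA ψ T ≤ psiD ψ T := by
  have hsome : {c | ∃ Γ : KTree k, isDDT T Γ ∧ treeComp ψ Γ = c}.Nonempty := by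
    by_contra hnone
    rw [Set.not_nonempty_iff_eq_empty] at hnone
    exact h (by rw [psiD, hnone, Nat.sInf_empty])
  obtain ⟨Γ, hΓ, hc⟩ := Nat.sInf_mem hsome
  exact Nat.sInf_le ⟨Γ, hΓ.1, hc⟩

section Hfun

variable {k : ℕ} (ψ : PBCM) (A : Set (Table k))

lemma HSet_mono {n m : ℕ} (hnm : n ≤ m) : HSet ψ A n ⊆ HSet ψ A m :=
  fun _ ⟨T, hTA, hT, hc⟩ => ⟨T, hTA, hT.trans hnm, hc⟩

lemma Hfun_le_Hfun {n m : ℕ} (hm : (HSet ψ A m).Finite) (hnm : n ≤ m) :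
    Hfun ψ A n ≤ Hfun ψ A m :=
  csSup_le_csSup' hm.bddAbove (HSet_mono ψ A hnm)

lemma Hfun_zero : Hfun ψ A 0 = 0 :=
  Nat.le_zero.mp <| csSup_le' fun _ ⟨_, _, hT, hc⟩ =>
    hc ▸ (psiD_eq_zero_of_psiA_eq_zero ψ (Nat.le_zero.mp hT)).le

lemma Hfun_le_of_psiD_le {c : ℕ} (hc : ∀ T ∈ A, psiD ψ T ≤ c) (n : ℕ) : Hfun ψ A n ≤ c :=
  csSup_le' fun _ ⟨T, hTA, _, hd⟩ => hd ▸ hc T hTA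

lemma infinite_psiD_image (hunb : ¬ ∃ c, ∀ T ∈ A, psiD ψ T ≤ c) : (psiD ψ '' A).Infinite :=
  Set.infinite_of_not_bddAbove fun ⟨c, hc⟩ =>
    hunb ⟨c, fun T hTA => hc ⟨T, hTA, rfl⟩⟩

lemma HDfun_psiD_image_le_Hfun {n : ℕ} (hn : (HSet ψ A n).Finite) :
    HDfun (psiD ψ '' A) n ≤ Hfun ψ A n := by
  refine csSup_le' ?_
  rintro d ⟨⟨T, hTA, rfl⟩, hdn⟩
  rcases eq_or_ne (psiD ψ T) 0 with h0 | h0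
  · exact h0 ▸ Nat.zero_le _
  · exact le_csSup hn.bddAbove ⟨T, hTA, (psiA_le_psiD_of_ne_zero ψ h0).trans hdn, rfl⟩

end Hfun

theorem stmt1_general {k : ℕ} (ψ : BCM) (A : Set (Table k))
    (hH : ∀ n, (HSet ψ.toPBCM A n).Finite) :
    Monotone (Hfun ψ.toPBCM A) ∧ Hfun ψ.toPBCM A 0 = 0 ∧
    ((∃ c, ∀ T ∈ A, psiD ψ.toPBCM T ≤ c) → ∃ c, ∀ n, Hfun ψ.toPBCM A n ≤ c) ∧
    (¬ (∃ c, ∀ T ∈ A, psiD ψ.toPBCM T ≤ c) →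
      ∃ D : Set ℕ, D.Infinite ∧ ∀ n, HDfun D n ≤ Hfun ψ.toPBCM A n) :=
  ⟨fun _ m hnm => Hfun_le_Hfun _ A (hH m) hnm,
    Hfun_zero _ A,
    fun ⟨c, hc⟩ => ⟨c, Hfun_le_of_psiD_le _ A hc⟩,
    fun hunb => ⟨_, infinite_psiD_image _ A hunb,
      fun n => HDfun_psiD_image_le_Hfun _ A (hH n)⟩⟩

/-- **Theorem 4.** If `H^∞_{ψ,A}` is everywhere defined then it is nondecreasing,
`H^∞_{ψ,A}(0) = 0`, and: (a) if `ψ^d` is bounded from above on `A` then `H^∞_{ψ,A}` is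
bounded by a constant; (b) otherwise there is an infinite `D ⊆ ℕ` with
`H^∞_{ψ,A}(n) ≥ H_D(n)` for all `n`. -/
theorem stmt1 {k : ℕ} (hk : 2 ≤ k) (ψ : BCM) (A : Set (Table k))
    (hclosed : IsClosedClass A) (hnontriv : NontrivialClass A)
    (hH : ∀ n, (HSet ψ.toPBCM A n).Finite) :
    Monotone (Hfun ψ.toPBCM A) ∧ Hfun ψ.toPBCM A 0 = 0 ∧
    ((∃ c, ∀ T ∈ A, psiD ψ.toPBCM T ≤ c) → ∃ c, ∀ n, Hfun ψ.toPBCM A n ≤ c) ∧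
    (¬ (∃ c, ∀ T ∈ A, psiD ψ.toPBCM T ≤ c) →
      ∃ D : Set ℕ, D.Infinite ∧ ∀ n, HDfun D n ≤ Hfun ψ.toPBCM A n) :=
  stmt1_general ψ A hH
end
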